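/- arXiv:1104.2818 — 3 statements merged into one kernel-verified Lean document; each statement's English description precedes it below -/
import Mathlib

section
/- Let F be a 3-satisfiable weighted CNF formula with unit clauses all positive, and let F_s be the set of soft (non-hard) clauses. Then there exists a truth assignment tau with sat_tau(F) >= (2/3) w(F) + (1/27) w(F_s). -/
open Classical

/-- A clause: a finite set of literals, each a (variable, polarity) pair. -/
abbrev Clause := Finset (ℕ × Bool)

/-- A truth assignment satisfies a clause if some literal evaluates to true. -/
def SatC (τ : ℕ → Bool) (C : Clause) : Prop := ∃ l ∈ C, τ l.1 = l.2

/-- A CNF formula: clauses are nonempty and contain no variable together with its negation. -/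
def IsCNF (F : Finset Clause) : Prop :=
  ∀ C ∈ F, C.Nonempty ∧ ∀ v : ℕ, ¬((v, true) ∈ C ∧ (v, false) ∈ C)

/-- Total weight of a set of clauses. -/
def wt (w : Clause → ℕ) (G : Finset Clause) : ℕ := ∑ C ∈ G, w C

/-- Total weight of the clauses of `G` satisfied by `τ`. -/
noncomputable def satWt (w : Clause → ℕ) (τ : ℕ → Bool) (G : Finset Clause) : ℕ :=
  ∑ C ∈ G.filter (fun C => SatC τ C), w C

/-- `F` is 2-satisfiable. -/
def Sat2 (F : Finset Clause) : Prop :=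
  ∀ C1 ∈ F, ∀ C2 ∈ F, ∃ τ, SatC τ C1 ∧ SatC τ C2

/-- `F` is 3-satisfiable. -/
def Sat3 (F : Finset Clause) : Prop :=
  ∀ C1 ∈ F, ∀ C2 ∈ F, ∀ C3 ∈ F, ∃ τ, SatC τ C1 ∧ SatC τ C2 ∧ SatC τ C3

/-- The set of variables of a formula. -/
def vars (F : Finset Clause) : Finset ℕ := F.sup (fun C => C.image Prod.fst)

/-- The set of clauses of `F` containing a variable of `U`. -/
noncomputable def FU (F : Finset Clause) (U : Finset ℕ) : Finset Clause :=
  F.filter (fun C => ∃ l ∈ C, l.1 ∈ U)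

/-- Unit variables: variables occurring in unit clauses. -/
def unitVars (F : Finset Clause) : Finset ℕ :=
  (F.filter (fun C => C.card = 1)).sup (fun C => C.image Prod.fst)

/-- All unit clauses of `F` are positive. -/
def UnitPos (F : Finset Clause) : Prop :=
  ∀ C ∈ F, C.card = 1 → ∃ x, C = {(x, true)}

/-- A hard clause: a positive unit clause, or a two-literal clause `{¬x, y}` / `{¬x, ¬y}`
with `x` a unit variable and `y` not a unit variable. -/
def IsHard (F : Finset Clause) (C : Clause) : Prop :=
  (∃ x, C = {(x, true)}) ∨
  (∃ x ∈ unitVars F, ∃ y ∉ unitVars F, ∃ b : Bool, C = {(x, false), (y, b)})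

/-- The soft (non-hard) clauses of `F`. -/
noncomputable def softF (F : Finset Clause) : Finset Clause :=
  F.filter (fun C => ¬ IsHard F C)

/-- Two-literal hard clauses. -/
noncomputable def F2set (F : Finset Clause) : Finset Clause :=
  F.filter (fun C => ∃ x ∈ unitVars F, ∃ y ∉ unitVars F, ∃ b : Bool, C = {(x, false), (y, b)})

/-- Non-unit variables occurring in two-literal hard clauses. -/
noncomputable def V2set (F : Finset Clause) : Finset ℕ :=
  ((F2set F).sup (fun C => C.image Prod.fst)) \ unitVars F

/-- `F` is a hard formula: every clause is hard. -/
def HardFormula (F : Finset Clause) : Prop := ∀ C ∈ F, IsHard F C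

/-- `F` is expanding: every set `X` of variables is covered by clauses of total weight at least `|X|`. -/
def Expanding (F : Finset Clause) (w : Clause → ℕ) : Prop :=
  ∀ X ⊆ vars F, X.card ≤ wt w (FU F X)

/-- Extend an assignment on the variables of `F` to all of `ℕ`. -/
noncomputable def extAssign (F : Finset Clause) (α : {v // v ∈ vars F} → Bool) : ℕ → Bool :=
  fun n => if h : n ∈ vars F then α ⟨n, h⟩ else false

/-- The probability that the random assignment (unit variables true with probability 2/3,
other variables true with probability 1/2, independently) satisfies the clause `C`. -/
noncomputable def probSat (F : Finset Clause) (C : Clause) : ℝ :=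
  ∑ α : {v // v ∈ vars F} → Bool,
    (∏ v : {v // v ∈ vars F},
      (if (v : ℕ) ∈ unitVars F then (if α v then (2:ℝ)/3 else 1/3) else 1/2)) *
    (if SatC (extAssign F α) C then 1 else 0)


/-!
Set every unit variable to true with probability 2/3 and every other variable to true with
probability 1/2, independently. A clause then fails with probability the product of the failure
probabilities of its literals: 1/3 for a positive unit literal, 2/3 for a negative one and 1/2
otherwise. Hard clauses thus fail with probability at most 1/3. A soft clause with at least three
literals fails with probability at most (2/3)^3 = 8/27; a soft unit clause cannot exist, and a
soft two-literal clause fails with probability at most 1/4 or 2/9, because 3-satisfiability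
forbids {¬x, ¬y} with x and y both unit variables. The expected satisfied weight is therefore
at least (2/3) w(F) + (1/27) w(F_s), and some assignment attains it.
-/

section ProductWeights

variable {ι : Type*} [Fintype ι] [DecidableEq ι] (p : ι → Bool → ℝ)

theorem sum_prod_mul_ite_forall (P : ι → Bool → Prop) [∀ i, DecidablePred (P i)] :
    ∑ α : ι → Bool, (∏ i, p i (α i)) * (if ∀ i, P i (α i) then 1 else 0) =
      ∏ i, ∑ b, if P i b then p i b else 0 := by
  rw [Fintype.prod_sum]
  refine Finset.sum_congr rfl fun α _ => ?_
  rw [Fintype.prod_ite_zero, mul_ite, mul_one, mul_zero]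

theorem sum_prod_eq_one (hp : ∀ i, p i true + p i false = 1) :
    ∑ α : ι → Bool, ∏ i, p i (α i) = 1 := by
  rw [← Fintype.prod_sum]
  simp [hp]

end ProductWeights

theorem exists_le_of_le_sum_mul {Ω : Type*} [Fintype Ω] [Nonempty Ω] {q f : Ω → ℝ} {B : ℝ}
    (hq : ∀ ω, 0 < q ω) (hq1 : ∑ ω, q ω = 1) (h : B ≤ ∑ ω, q ω * f ω) : ∃ ω, B ≤ f ω := by
  obtain ⟨ω, -, hω⟩ := Finset.exists_le_of_sum_le (f := fun ω => q ω * B)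
    (g := fun ω => q ω * f ω) Finset.univ_nonempty
    (by rwa [← Finset.sum_mul, hq1, one_mul])
  exact ⟨ω, le_of_mul_le_mul_left hω (hq ω)⟩

theorem Finset.prod_eq_prod_prod_ite {α β M : Type*} [DecidableEq α] [DecidableEq β]
    [Fintype β] [CommMonoid M] {s : Finset α} {C : Finset (α × β)} (hC : C ⊆ s ×ˢ univ)
    (f : α × β → M) :
    ∏ l ∈ C, f l = ∏ a ∈ s, ∏ b, if (a, b) ∈ C then f (a, b) else 1 := by
  rw [← Finset.prod_product (f := fun l => if l ∈ C then f l else 1), Finset.prod_ite_mem,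
    Finset.inter_eq_right.mpr hC]

theorem sum_ite_mem_eq_prod_ite {α : Type*} [DecidableEq α] {C : Finset (α × Bool)} {a : α}
    (ha : ¬((a, true) ∈ C ∧ (a, false) ∈ C)) {p : Bool → ℝ} (hp : p true + p false = 1) :
    ∑ b, (if (a, b) ∈ C then 0 else p b) = ∏ b, if (a, b) ∈ C then p (!b) else 1 := by
  by_cases ht : (a, true) ∈ C <;> by_cases hf : (a, false) ∈ C <;> simp_all

noncomputable def valProb (F : Finset Clause) (v : ℕ) (b : Bool) : ℝ :=
  if v ∈ unitVars F then (if b then 2/3 else 1/3) else 1/2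

theorem valProb_pos (F : Finset Clause) (v : ℕ) (b : Bool) : 0 < valProb F v b := by
  unfold valProb; split_ifs <;> norm_num

theorem valProb_le (F : Finset Clause) (v : ℕ) (b : Bool) : valProb F v b ≤ 2/3 := by
  unfold valProb; split_ifs <;> norm_num

theorem valProb_true_add_false (F : Finset Clause) (v : ℕ) :
    valProb F v true + valProb F v false = 1 := by
  by_cases hv : v ∈ unitVars F <;> simp [valProb, hv] <;> norm_num

noncomputable def assignProb (F : Finset Clause) (α : {v // v ∈ vars F} → Bool) : ℝ :=
  ∏ v : {v // v ∈ vars F}, valProb F v (α v)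

theorem assignProb_pos (F : Finset Clause) (α : {v // v ∈ vars F} → Bool) :
    0 < assignProb F α :=
  Finset.prod_pos fun v _ => valProb_pos F v (α v)

theorem sum_assignProb (F : Finset Clause) : ∑ α, assignProb F α = 1 :=
  sum_prod_eq_one (fun (v : {v // v ∈ vars F}) b => valProb F v b) fun v =>
    valProb_true_add_false F v

theorem probSat_eq_sum (F : Finset Clause) (C : Clause) :
    probSat F C = ∑ α, assignProb F α * if SatC (extAssign F α) C then 1 else 0 :=
  rfl

theorem mem_vars_of_mem {F : Finset Clause} {C : Clause} {l : ℕ × Bool} (hC : C ∈ F)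
    (hl : l ∈ C) : l.1 ∈ vars F :=
  Finset.mem_sup.mpr ⟨C, hC, Finset.mem_image_of_mem _ hl⟩

theorem not_satC_extAssign_iff {F : Finset Clause} {C : Clause} (hC : C ∈ F)
    (α : {v // v ∈ vars F} → Bool) :
    ¬ SatC (extAssign F α) C ↔ ∀ v : {v // v ∈ vars F}, ((v : ℕ), α v) ∉ C := by
  constructor
  · exact fun h v hv => h ⟨_, hv, by simp [extAssign]⟩
  · rintro h ⟨l, hl, hsat⟩
    have hv := mem_vars_of_mem hC hl
    have hα : α ⟨l.1, hv⟩ = l.2 := by simpa [extAssign, hv] using hsat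
    exact h ⟨l.1, hv⟩ (by simpa [hα] using hl)

theorem probSat_eq {F : Finset Clause} (hF : IsCNF F) {C : Clause} (hC : C ∈ F) :
    probSat F C = 1 - ∏ l ∈ C, valProb F l.1 (!l.2) := by
  have hsub : C ⊆ vars F ×ˢ Finset.univ := fun l hl => by
    simpa using mem_vars_of_mem hC hl
  have hfail : ∑ α, assignProb F α * (if ∀ v : {v // v ∈ vars F}, ((v : ℕ), α v) ∉ C
      then 1 else 0) = ∏ l ∈ C, valProb F l.1 (!l.2) := by
    unfold assignProb
    rw [sum_prod_mul_ite_forall (fun (v : {v // v ∈ vars F}) b => valProb F v b)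
      (fun v b => ((v : ℕ), b) ∉ C),
      Finset.prod_eq_prod_prod_ite hsub,
      ← Finset.prod_coe_sort (vars F)]
    refine Finset.prod_congr rfl fun v _ => ?_
    -- the clause has no complementary pair, so each variable can falsify it in at most one way
    simpa [ite_not] using sum_ite_mem_eq_prod_ite ((hF C hC).2 v) (valProb_true_add_false F v)
  rw [probSat_eq_sum, ← hfail, eq_sub_iff_add_eq, ← Finset.sum_add_distrib]
  refine (Finset.sum_congr rfl fun α _ => ?_).trans (sum_assignProb F)
  have := not_satC_extAssign_iff hC α
  split_ifs <;> simp_all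

theorem sum_mul_probSat_eq (F : Finset Clause) (w : Clause → ℕ) (G : Finset Clause) :
    ∑ C ∈ G, (w C : ℝ) * probSat F C = ∑ α, assignProb F α * satWt w (extAssign F α) G := by
  simp only [probSat_eq_sum, Finset.mul_sum, satWt, Nat.cast_sum, Finset.sum_filter]
  rw [Finset.sum_comm]
  refine Finset.sum_congr rfl fun α _ => Finset.sum_congr rfl fun C _ => ?_
  split_ifs <;> simp [mul_comm]

theorem mem_unitVars_of_mem {F : Finset Clause} {x : ℕ} (h : ({(x, true)} : Clause) ∈ F) :
    x ∈ unitVars F :=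
  Finset.mem_sup.mpr ⟨{(x, true)}, Finset.mem_filter.mpr ⟨h, by simp⟩, by simp⟩

theorem unit_mem_of_mem_unitVars {F : Finset Clause} (hup : UnitPos F) {x : ℕ}
    (h : x ∈ unitVars F) : ({(x, true)} : Clause) ∈ F := by
  obtain ⟨C, hCf, hx⟩ := Finset.mem_sup.mp h
  obtain ⟨hCF, hc1⟩ := Finset.mem_filter.mp hCf
  obtain ⟨y, rfl⟩ := hup C hCF hc1
  simp only [Finset.image_singleton, Finset.mem_singleton] at hx
  exact hx ▸ hCF

theorem valProb_le_half {F : Finset Clause} {v : ℕ} {b : Bool}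
    (h : ¬(v ∈ unitVars F ∧ b = true)) : valProb F v b ≤ 1/2 := by
  unfold valProb; split_ifs <;> norm_num; simp_all

theorem prod_valProb_le_of_isHard {F : Finset Clause} {C : Clause} (hC : C ∈ F)
    (h : IsHard F C) : ∏ l ∈ C, valProb F l.1 (!l.2) ≤ 1/3 := by
  rcases h with ⟨x, rfl⟩ | ⟨x, hx, y, hy, b, rfl⟩
  · simp [valProb, mem_unitVars_of_mem hC]
  · have hxy : ((x, false) : ℕ × Bool) ≠ (y, b) := fun h => hy ((Prod.mk.inj h).1 ▸ hx)
    rw [Finset.prod_pair hxy]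
    simp [valProb, hx, hy]
    norm_num

theorem negUnit_pair_not_mem {F : Finset Clause} (h3 : Sat3 F) (hup : UnitPos F) {x y : ℕ}
    (hx : x ∈ unitVars F) (hy : y ∈ unitVars F) : ({(x, false), (y, false)} : Clause) ∉ F := by
  intro hC
  obtain ⟨τ, ⟨_, hlx, hτx⟩, ⟨_, hly, hτy⟩, ⟨l, hl, hτl⟩⟩ :=
    h3 _ (unit_mem_of_mem_unitVars hup hx) _ (unit_mem_of_mem_unitVars hup hy) _ hC
  simp only [Finset.mem_singleton] at hlx hly
  subst hlx hly
  rcases Finset.mem_insert.mp hl with rfl | hl <;> simp_all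

theorem unit_pos_of_negUnit_pair_soft {F : Finset Clause} (h3 : Sat3 F) (hup : UnitPos F)
    {x y : ℕ} {t : Bool} (hC : {(x, false), (y, t)} ∈ F) (hsoft : ¬IsHard F {(x, false), (y, t)})
    (hx : x ∈ unitVars F) : y ∈ unitVars F ∧ t = true := by
  have hy : y ∈ unitVars F := by
    by_contra hy
    exact hsoft (Or.inr ⟨x, hx, y, hy, t, rfl⟩)
  refine ⟨hy, ?_⟩
  by_contra ht
  rw [Bool.not_eq_true] at ht
  exact negUnit_pair_not_mem h3 hup hx hy (ht ▸ hC)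

theorem mul_valProb_le_of_soft {F : Finset Clause} (h3 : Sat3 F) (hup : UnitPos F)
    {a b : ℕ × Bool} (hC : {a, b} ∈ F) (hsoft : ¬IsHard F {a, b}) :
    valProb F a.1 (!a.2) * valProb F b.1 (!b.2) ≤ 8/27 := by
  obtain ⟨x, s⟩ := a
  obtain ⟨y, t⟩ := b
  by_cases hx : x ∈ unitVars F ∧ s = false
  · obtain ⟨hx, rfl⟩ := hx
    obtain ⟨hy, rfl⟩ := unit_pos_of_negUnit_pair_soft h3 hup hC hsoft hx
    simp [valProb, hx, hy]
    norm_num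
  by_cases hy : y ∈ unitVars F ∧ t = false
  · obtain ⟨hy, rfl⟩ := hy
    rw [Finset.pair_comm] at hC hsoft
    obtain ⟨hx', rfl⟩ := unit_pos_of_negUnit_pair_soft h3 hup hC hsoft hy
    simp [valProb, hx', hy]
    norm_num
  have hxs := valProb_le_half (F := F) (v := x) (b := !s) (by simpa using hx)
  have hyt := valProb_le_half (F := F) (v := y) (b := !t) (by simpa using hy)
  nlinarith [valProb_pos F x (!s), valProb_pos F y (!t)]

theorem prod_valProb_le_of_soft {F : Finset Clause} (hF : IsCNF F) (h3 : Sat3 F)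
    (hup : UnitPos F) {C : Clause} (hC : C ∈ F) (hsoft : ¬IsHard F C) :
    ∏ l ∈ C, valProb F l.1 (!l.2) ≤ 8/27 := by
  obtain hcard | hcard := lt_or_ge C.card 3
  · interval_cases hc : C.card
    · exact absurd (Finset.card_eq_zero.mp hc) (hF C hC).1.ne_empty
    · obtain ⟨x, rfl⟩ := hup C hC hc
      exact absurd (Or.inl ⟨x, rfl⟩) hsoft
    · obtain ⟨a, b, hab, rfl⟩ := Finset.card_eq_two.mp hc
      rw [Finset.prod_pair hab]
      exact mul_valProb_le_of_soft h3 hup hC hsoft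
  · calc ∏ l ∈ C, valProb F l.1 (!l.2)
        ≤ ∏ l ∈ C, (2/3 : ℝ) :=
          Finset.prod_le_prod (fun l _ => (valProb_pos F _ _).le) fun l _ => valProb_le F _ _
      _ = (2/3) ^ C.card := Finset.prod_const _
      _ ≤ (2/3) ^ 3 := pow_le_pow_of_le_one (by norm_num) (by norm_num) hcard
      _ = 8/27 := by norm_num

theorem le_sum_mul_probSat {F : Finset Clause} (w : Clause → ℕ) (hF : IsCNF F) (h3 : Sat3 F)
    (hup : UnitPos F) :
    (2:ℝ)/3 * wt w F + (1:ℝ)/27 * wt w (softF F) ≤ ∑ C ∈ F, (w C : ℝ) * probSat F C := by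
  have hsplit (g : Clause → ℝ) :
      ∑ C ∈ F, g C = ∑ C ∈ F.filter (IsHard F), g C + ∑ C ∈ softF F, g C :=
    (Finset.sum_filter_add_sum_filter_not F _ g).symm
  have hhard : ∀ C ∈ F.filter (IsHard F), 2/3 * (w C : ℝ) ≤ w C * probSat F C := by
    intro C hC
    obtain ⟨hCF, h⟩ := Finset.mem_filter.mp hC
    have := prod_valProb_le_of_isHard hCF h
    rw [probSat_eq hF hCF]
    nlinarith [(w C).cast_nonneg (α := ℝ)]
  have hsoft : ∀ C ∈ softF F, 19/27 * (w C : ℝ) ≤ w C * probSat F C := by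
    intro C hC
    obtain ⟨hCF, h⟩ := Finset.mem_filter.mp hC
    have := prod_valProb_le_of_soft hF h3 hup hCF h
    rw [probSat_eq hF hCF]
    nlinarith [(w C).cast_nonneg (α := ℝ)]
  calc (2:ℝ)/3 * wt w F + (1:ℝ)/27 * wt w (softF F)
      = ∑ C ∈ F.filter (IsHard F), 2/3 * (w C : ℝ) + ∑ C ∈ softF F, 19/27 * (w C : ℝ) := by
        simp only [wt, Nat.cast_sum, hsplit fun C => (w C : ℝ), ← Finset.mul_sum]
        ring
    _ ≤ ∑ C ∈ F.filter (IsHard F), (w C : ℝ) * probSat F C +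
          ∑ C ∈ softF F, (w C : ℝ) * probSat F C :=
        add_le_add (Finset.sum_le_sum hhard) (Finset.sum_le_sum hsoft)
    _ = ∑ C ∈ F, (w C : ℝ) * probSat F C := (hsplit _).symm

theorem stmt12_general (F : Finset Clause) (w : Clause → ℕ)
    (hF : IsCNF F) (h3 : Sat3 F) (hup : UnitPos F) :
    ∃ τ : ℕ → Bool,
      (2:ℝ)/3 * wt w F + (1:ℝ)/27 * wt w (softF F) ≤ (satWt w τ F : ℝ) := by
  obtain ⟨α, hα⟩ := exists_le_of_le_sum_mul (assignProb_pos F) (sum_assignProb F)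
    ((le_sum_mul_probSat w hF h3 hup).trans_eq (sum_mul_probSat_eq F w F))
  exact ⟨extAssign F α, hα⟩

theorem stmt12 (F : Finset Clause) (w : Clause → ℕ)
    (hF : IsCNF F) (hw : ∀ C ∈ F, 0 < w C) (h3 : Sat3 F) (hup : UnitPos F) :
    ∃ τ : ℕ → Bool,
      (2:ℝ)/3 * wt w F + (1:ℝ)/27 * wt w (softF F) ≤ (satWt w τ F : ℝ) :=
  stmt12_general F w hF h3 hup
end

section
/- Let F be a hard 3-satisfiable weighted CNF formula. Then there is an assignment satisfying clauses of total weight at least (2/3) w(F) + (2/21) |V(F)|. -/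
open Classical

/-!
In a hard formula the unit variables `U` (`unitVars F`) and the other variables `V` (`V2set F`)
are disjoint, every two-literal clause is `{¬x, y}` or `{¬x, ¬y}` with `x ∈ U`, `y ∈ V`, and
`3`-satisfiability (with the unit clause `{x}`) forbids both to occur for the same pair `(x, y)`.
Two randomised assignments give the two bounds.

Set `V` uniformly at random and then each `x ∈ U` optimally; the clauses containing `x` involve no
other unit variable. If `a` is the weight of `{x}` and `b` that of its two-literal clauses, the
expected gain is at least `(2/3)(a + b) + 1/6`: unless `b = 2a` one of the two choices for `x`
already does this, and if `b = 2a` the spread of the satisfied weight helps, since flipping one `y`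
changes it by at least `1`.

Set each `x ∈ U` true with probability `2/3` (a uniform value in `Fin 3` that is nonzero) and then
each `y ∈ V` optimally. The expected gain per `y` is `(2/3)·(weight of its clauses) + 2/9`, the
`2/9` being half of `𝔼|s₁ - s₂| ≥ 4/9`, where `s₁`, `s₂` are the weights of the clauses `{¬x, y}`
and `{¬x, ¬y}` with `x` true. If both kinds occur, swapping two of their unit variables gives this.

Weighting the two bounds by `12/21` and `9/21` gives the theorem.
-/

open scoped BigOperators
open Finset

section Expectation

variable {ι γ Ω : Type*} [Fintype ι] [DecidableEq ι] [Fintype γ] [Nonempty γ] [Fintype Ω]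

lemma Fintype.expect_apply_eval (i : ι) (g : γ → ℝ) :
    𝔼 α : ι → γ, g (α i) = 𝔼 v, g v := by
  rw [Fintype.expect_equiv (Equiv.funSplitAt i γ) (fun α => g (α i)) (fun p => g p.1)
    (fun _ => rfl), ← univ_product_univ, expect_product]
  simp

lemma Fintype.expect_apply_eval₂ {i j : ι} (hij : j ≠ i) (g : γ → γ → ℝ) :
    𝔼 α : ι → γ, g (α i) (α j) = 𝔼 u, 𝔼 v, g u v := by
  rw [Fintype.expect_equiv (Equiv.funSplitAt i γ) (fun α => g (α i) (α j))
    (fun p => g p.1 (p.2 ⟨j, hij⟩)) (fun _ => rfl), ← univ_product_univ,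
    expect_product]
  simp only [Fintype.expect_apply_eval (⟨j, hij⟩ : {k // k ≠ i}) (g _)]

lemma expect_abs_sub_comp_le (σ : Equiv.Perm Ω) (f : Ω → ℝ) :
    𝔼 ω, |f ω - f (σ ω)| ≤ 2 * 𝔼 ω, |f ω| := by
  calc 𝔼 ω, |f ω - f (σ ω)| ≤ 𝔼 ω, (|f ω| + |f (σ ω)|) :=
        expect_le_expect fun ω _ => abs_sub _ _
    _ = 2 * 𝔼 ω, |f ω| := by
        rw [expect_add_distrib, Fintype.expect_equiv σ (fun ω => |f (σ ω)|) (fun ω => |f ω|)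
          (fun _ => rfl)]
        ring

lemma expect_sum_apply_bool (e : ι → Bool → ℝ) :
    𝔼 α : ι → Bool, ∑ i, e i (α i) = ∑ i, (e i true + e i false) / 2 := by
  rw [expect_sum_comm]
  refine sum_congr rfl fun i _ => ?_
  rw [Fintype.expect_apply_eval i (e i), Fintype.expect_eq_sum_div_card, Fintype.sum_bool]
  simp

lemma half_le_expect_abs_sum_apply_sub (e : ι → Bool → ℝ) (t : ℝ) {i : ι}
    (hi : 1 ≤ |e i true - e i false|) :
    1 / 2 ≤ 𝔼 α : ι → Bool, |∑ j, e j (α j) - t| := by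
  set f : (ι → Bool) → ℝ := fun α => ∑ j, e j (α j) - t
  have hflip : Function.Involutive fun α : ι → Bool => Function.update α i (!α i) := by
    intro α
    ext j
    by_cases hj : j = i <;> simp [hj]
  have hdiff : ∀ α, 1 ≤ |f α - f (hflip.toPerm _ α)| := by
    intro α
    have hsum : ∀ α : ι → Bool, ∑ j, e j (α j) = e i (α i) + ∑ j ∈ {i}ᶜ, e j (α j) :=
      fun α => Fintype.sum_eq_add_sum_compl i _
    have hrest : ∑ j ∈ {i}ᶜ, e j (Function.update α i (!α i) j) = ∑ j ∈ {i}ᶜ, e j (α j) :=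
      sum_congr rfl fun j hj => by
        rw [Function.update_of_ne (by simpa using hj)]
    simp only [f, Function.Involutive.coe_toPerm, hsum α, hsum (Function.update α i _), hrest,
      Function.update_self]
    cases α i
    · rw [abs_sub_comm]; simpa using hi
    · simpa using hi
  linarith [expect_abs_sub_comp_le (hflip.toPerm _) f,
    le_expect univ_nonempty fun α _ => hdiff α]

lemma expect_ite_fin_three (c : ℝ) : 𝔼 v : Fin 3, (if v = 0 then 0 else c) = 2 / 3 * c := by
  rw [Fintype.expect_eq_sum_div_card, Fin.sum_univ_three]
  simp
  ring

lemma expect_sum_ite_fin_three (c : ι → ℝ) :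
    𝔼 β : ι → Fin 3, ∑ i, (if β i = 0 then 0 else c i) = 2 / 3 * ∑ i, c i := by
  rw [expect_sum_comm, mul_sum]
  exact sum_congr rfl fun i _ =>
    (Fintype.expect_apply_eval i fun v => if v = 0 then 0 else c i).trans
      (expect_ite_fin_three _)

lemma two_thirds_le_expect_abs_sum_of_nonneg {c : ι → ℝ} (hc : ∀ i, 0 ≤ c i) {i₀ : ι}
    (hi₀ : 1 ≤ c i₀) : 2 / 3 ≤ 𝔼 β : ι → Fin 3, |∑ i, if β i = 0 then 0 else c i| :=
  calc 2 / 3 ≤ 2 / 3 * ∑ i, c i := by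
        linarith [single_le_sum (fun i _ => hc i) (mem_univ i₀)]
    _ = 𝔼 β : ι → Fin 3, ∑ i, if β i = 0 then 0 else c i := (expect_sum_ite_fin_three c).symm
    _ ≤ _ := expect_le_expect fun β _ => le_abs_self _

lemma four_ninths_le_expect_abs_sum_of_two_le {c : ι → ℝ} {i j : ι} (hji : j ≠ i)
    (hcij : 2 ≤ |c i - c j|) :
    4 / 9 ≤ 𝔼 β : ι → Fin 3, |∑ k, if β k = 0 then 0 else c k| := by
  set X : Fin 3 → ℝ := fun v => if v = 0 then 0 else 1
  set f : (ι → Fin 3) → ℝ := fun β => ∑ k, if β k = 0 then 0 else c k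
  set σ : Equiv.Perm (ι → Fin 3) := (Equiv.swap i j).arrowCongr (Equiv.refl _)
  have hdiff : ∀ β, f β - f (σ β) = (c i - c j) * (X (β i) - X (β j)) := by
    intro β
    have hσ : f (σ β) = ∑ k, if β k = 0 then 0 else c (Equiv.swap i j k) := by
      rw [← Equiv.sum_comp (Equiv.swap i j)]
      simp [f, σ, Equiv.arrowCongr_apply]
    rw [hσ, ← sum_sub_distrib, Fintype.sum_eq_add i j hji.symm]
    · simp only [Equiv.swap_apply_left, Equiv.swap_apply_right, X]
      split_ifs <;> ring
    · rintro k ⟨hki, hkj⟩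
      simp [Equiv.swap_apply_of_ne_of_ne hki hkj]
  have hX : 𝔼 β : ι → Fin 3, |X (β i) - X (β j)| = 4 / 9 := by
    rw [Fintype.expect_apply_eval₂ hji fun u v => |X u - X v|]
    simp [X, Fintype.expect_eq_sum_div_card, Fin.sum_univ_three]
    norm_num
  have hswap : 2 * (4 / 9) ≤ 𝔼 β, |f β - f (σ β)| := by
    rw [← hX, mul_expect]
    refine expect_le_expect fun β _ => ?_
    rw [hdiff, abs_mul]
    exact mul_le_mul_of_nonneg_right hcij (abs_nonneg _)
  linarith [expect_abs_sub_comp_le σ f]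

lemma four_ninths_le_expect_abs_sum {c : ι → ℝ} (hc : ∀ i, c i = 0 ∨ 1 ≤ |c i|)
    (hne : ∃ i, c i ≠ 0) : 4 / 9 ≤ 𝔼 β : ι → Fin 3, |∑ i, if β i = 0 then 0 else c i| := by
  by_cases hmix : ∃ i j, 0 < c i ∧ c j < 0
  · obtain ⟨i, j, hi, hj⟩ := hmix
    refine four_ninths_le_expect_abs_sum_of_two_le (i := i) (j := j) (by rintro rfl; linarith) ?_
    rw [abs_of_pos (by linarith)]
    linarith [(hc i).resolve_left hi.ne', abs_of_pos hi, (hc j).resolve_left hj.ne, abs_of_neg hj]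
  push Not at hmix
  obtain ⟨i₀, hi₀⟩ := hne
  have h1 : 1 ≤ |c i₀| := (hc i₀).resolve_left hi₀
  rcases hi₀.lt_or_gt with hneg | hpos
  · have hbound := two_thirds_le_expect_abs_sum_of_nonneg (c := fun i => -c i) (i₀ := i₀)
      (fun j => by by_contra h; linarith [hmix j i₀ (by linarith)])
      (by rwa [abs_of_neg hneg] at h1)
    have hneg_sum : ∀ β : ι → Fin 3, ∑ i, (if β i = 0 then 0 else -c i)
        = -∑ i, if β i = 0 then 0 else c i := fun β => by
      rw [← sum_neg_distrib]
      exact sum_congr rfl fun i _ => by split_ifs <;> simp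
    simp only [hneg_sum, abs_neg] at hbound
    linarith
  · linarith [two_thirds_le_expect_abs_sum_of_nonneg (hmix i₀ · hpos)
      (by rwa [abs_of_pos hpos] at h1)]

lemma le_expect_max_add [Nonempty Ω] {a b : ℕ} {R : Ω → ℝ} (ha : 1 ≤ a) (hR : 𝔼 ω, R ω = b / 2)
    (hspread : b = 2 * a → 1 / 2 ≤ 𝔼 ω, |R ω - a|) :
    2 / 3 * ((a : ℝ) + b) + 1 / 6 ≤ 𝔼 ω, max (b : ℝ) (a + R ω) := by
  have ha' : (1 : ℝ) ≤ a := by exact_mod_cast ha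
  rcases (by omega : b + 1 ≤ 2 * a ∨ 2 * a + 1 ≤ b ∨ b = 2 * a) with hab | hab | hab
  · have hab' : (b : ℝ) + 1 ≤ 2 * a := by exact_mod_cast hab
    calc 2 / 3 * ((a : ℝ) + b) + 1 / 6 ≤ 𝔼 ω, ((a : ℝ) + R ω) := by
          rw [expect_add_distrib, expect_const univ_nonempty, hR]
          linarith
      _ ≤ _ := expect_le_expect fun ω _ => le_max_right _ _
  · have hab' : 2 * (a : ℝ) + 1 ≤ b := by exact_mod_cast hab
    calc 2 / 3 * ((a : ℝ) + b) + 1 / 6 ≤ 𝔼 _ω : Ω, (b : ℝ) := by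
          rw [expect_const univ_nonempty]
          linarith
      _ ≤ _ := expect_le_expect fun ω _ => le_max_left _ _
  · have hab' : (b : ℝ) = 2 * a := by exact_mod_cast hab
    have hmax : ∀ ω, max (b : ℝ) (a + R ω) = (3 * a + R ω + |R ω - a|) / 2 := fun ω => by
      rw [hab']
      rcases le_total (R ω) a with h | h
      · rw [max_eq_left (by linarith), abs_of_nonpos (by linarith)]; ring
      · rw [max_eq_right (by linarith), abs_of_nonneg (by linarith)]; ring
    simp only [hmax, ← expect_div, expect_add_distrib, expect_const univ_nonempty, hR]
    linarith [hspread hab]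

lemma le_expect_sub_min [Nonempty Ω] {T₁ T₂ : ℝ} {s₁ s₂ : Ω → ℝ} (h₁ : 𝔼 ω, s₁ ω = 2 / 3 * T₁)
    (h₂ : 𝔼 ω, s₂ ω = 2 / 3 * T₂) (hspread : 4 / 9 ≤ 𝔼 ω, |s₁ ω - s₂ ω|) :
    2 / 3 * (T₁ + T₂) + 2 / 9 ≤ 𝔼 ω, (T₁ + T₂ - min (s₁ ω) (s₂ ω)) := by
  have hmin : ∀ ω, min (s₁ ω) (s₂ ω) = (s₁ ω + s₂ ω - |s₁ ω - s₂ ω|) / 2 := fun ω => by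
    rcases le_total (s₁ ω) (s₂ ω) with h | h
    · rw [min_eq_left h, abs_of_nonpos (by linarith)]; ring
    · rw [min_eq_right h, abs_of_nonneg (by linarith)]; ring
  simp only [hmin, expect_sub_distrib, ← expect_div, expect_add_distrib,
    expect_const univ_nonempty, h₁, h₂]
  linarith

end Expectation

lemma one_le_abs_natCast_sub {m n : ℕ} (h : m ≠ n) : 1 ≤ |(m : ℝ) - n| := by
  have hz : (m : ℤ) - n ≠ 0 := sub_ne_zero.mpr (by exact_mod_cast h)
  exact_mod_cast Int.one_le_abs hz

noncomputable def pairWt (F : Finset Clause) (w : Clause → ℕ) (x y : ℕ) (b : Bool) : ℕ :=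
  if ({(x, false), (y, b)} : Clause) ∈ F then w {(x, false), (y, b)} else 0

section HardFormula

variable {F : Finset Clause} {w : Clause → ℕ}

lemma satC_singleton_iff {τ : ℕ → Bool} {x : ℕ} : SatC τ {(x, true)} ↔ τ x = true := by
  simp [SatC]

lemma satC_pair_iff {τ : ℕ → Bool} {x y : ℕ} {b : Bool} :
    SatC τ {(x, false), (y, b)} ↔ τ x = false ∨ τ y = b := by
  simp [SatC]

lemma mem_unitVars_iff (hhard : HardFormula F) {x : ℕ} :
    x ∈ unitVars F ↔ ({(x, true)} : Clause) ∈ F := by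
  constructor
  · intro hx
    obtain ⟨C, hC, hxC⟩ := mem_sup.mp hx
    obtain ⟨hCF, hcard⟩ := mem_filter.mp hC
    rcases hhard C hCF with ⟨z, rfl⟩ | ⟨a, ha, b, hb, c, rfl⟩
    · simp_all
    · have hab : a ≠ b := fun h => hb (h ▸ ha)
      simp [card_insert_of_notMem, hab] at hcard
  · intro hx
    exact mem_sup.mpr ⟨_, mem_filter.mpr ⟨hx, by simp⟩, by simp⟩

lemma mem_V2set_iff {y : ℕ} :
    y ∈ V2set F ↔ y ∉ unitVars F ∧
      ∃ x ∈ unitVars F, ∃ b : Bool, ({(x, false), (y, b)} : Clause) ∈ F := by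
  simp only [V2set, F2set, mem_sdiff, mem_sup, mem_filter]
  constructor
  · rintro ⟨⟨C, ⟨hCF, x, hx, y', hy', b, rfl⟩, hyC⟩, hy⟩
    refine ⟨hy, x, hx, b, ?_⟩
    rcases (by simpa using hyC : y = x ∨ y = y') with rfl | rfl
    · exact absurd hx hy
    · exact hCF
  · rintro ⟨hy, x, hx, b, hF⟩
    exact ⟨⟨_, ⟨hF, x, hx, y, hy, b, rfl⟩, by simp⟩, hy⟩

lemma vars_eq_union (hhard : HardFormula F) : vars F = unitVars F ∪ V2set F := by
  ext v
  simp only [vars, mem_union, mem_sup]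
  constructor
  · rintro ⟨C, hCF, hvC⟩
    rcases hhard C hCF with ⟨z, rfl⟩ | ⟨x, hx, y, hy, b, rfl⟩
    · left
      rw [(by simpa using hvC : v = z), mem_unitVars_iff hhard]
      exact hCF
    · rcases (by simpa using hvC : v = x ∨ v = y) with rfl | rfl
      · exact Or.inl hx
      · exact Or.inr (mem_V2set_iff.mpr ⟨hy, x, hx, b, hCF⟩)
  · rintro (hv | hv)
    · exact ⟨_, (mem_unitVars_iff hhard).mp hv, by simp⟩
    · obtain ⟨-, x, -, b, hF⟩ := mem_V2set_iff.mp hv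
      exact ⟨_, hF, by simp⟩

lemma card_vars (hhard : HardFormula F) :
    (vars F).card = (unitVars F).card + (V2set F).card := by
  rw [vars_eq_union hhard, card_union_of_disjoint]
  exact disjoint_left.mpr fun v hv hv' => (mem_V2set_iff.mp hv').1 hv

lemma pairWt_eq_zero_or (h3 : Sat3 F) (hhard : HardFormula F) {x : ℕ}
    (hx : x ∈ unitVars F) (y : ℕ) : pairWt F w x y true = 0 ∨ pairWt F w x y false = 0 := by
  by_contra! h
  have hT : ({(x, false), (y, true)} : Clause) ∈ F := by by_contra hT; simp [pairWt, hT] at h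
  have hF : ({(x, false), (y, false)} : Clause) ∈ F := by by_contra hF; simp [pairWt, hF] at h
  obtain ⟨τ, h1, h2, h3⟩ := h3 _ ((mem_unitVars_iff hhard).mp hx) _ hT _ hF
  rw [satC_singleton_iff] at h1
  rw [satC_pair_iff] at h2 h3
  cases hτ : τ y <;> simp_all

lemma pair_injOn :
    Set.InjOn (fun p : ℕ × ℕ × Bool => ({(p.1, false), (p.2.1, p.2.2)} : Clause))
      (unitVars F ×ˢ V2set F ×ˢ (univ : Finset Bool) : Finset _) := by
  rintro ⟨x, y, b⟩ hp ⟨x', y', b'⟩ hp' h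
  replace h : ({(x, false), (y, b)} : Clause) = {(x', false), (y', b')} := h
  simp only [coe_product, Set.mem_prod, mem_coe, coe_univ,
    Set.mem_univ, and_true] at hp hp'
  have hxy : ∀ {u v}, u ∈ unitVars F → v ∈ V2set F → u ≠ v := fun hu hv huv =>
    (mem_V2set_iff.mp hv).1 (huv ▸ hu)
  have h1 : (x, false) ∈ ({(x', false), (y', b')} : Clause) := by rw [← h]; simp
  have h2 : (y, b) ∈ ({(x', false), (y', b')} : Clause) := by rw [← h]; simp
  simp only [mem_insert, mem_singleton, Prod.mk.injEq] at h1 h2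
  rcases h1 with ⟨rfl, -⟩ | ⟨rfl, -⟩
  · rcases h2 with ⟨rfl, -⟩ | ⟨rfl, rfl⟩
    · exact absurd rfl (hxy hp.1 hp.2)
    · rfl
  · exact absurd rfl (hxy hp.1 hp'.2)

lemma sum_eq_units_add_pairs (hhard : HardFormula F) {M : Type*} [AddCommMonoid M]
    (g : Clause → M) :
    ∑ C ∈ F, g C = ∑ x ∈ unitVars F, (g {(x, true)} + ∑ y ∈ V2set F, ∑ b : Bool,
      if ({(x, false), (y, b)} : Clause) ∈ F then g {(x, false), (y, b)} else 0) := by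
  set P := (unitVars F ×ˢ V2set F ×ˢ univ).filter
    (fun p : ℕ × ℕ × Bool => ({(p.1, false), (p.2.1, p.2.2)} : Clause) ∈ F)
  have hF : F = (unitVars F).image (fun x => ({(x, true)} : Clause)) ∪
      P.image (fun p => ({(p.1, false), (p.2.1, p.2.2)} : Clause)) := by
    ext C
    simp only [mem_union, mem_image, P, mem_filter, mem_product,
      mem_univ, and_true, Prod.exists]
    constructor
    · intro hC
      rcases hhard C hC with ⟨x, rfl⟩ | ⟨x, hx, y, hy, b, rfl⟩
      · exact Or.inl ⟨x, (mem_unitVars_iff hhard).mpr hC, rfl⟩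
      · exact Or.inr ⟨x, y, b, ⟨⟨hx, mem_V2set_iff.mpr ⟨hy, x, hx, b, hC⟩⟩, hC⟩, rfl⟩
    · rintro (⟨x, hx, rfl⟩ | ⟨x, y, b, ⟨-, hC⟩, rfl⟩)
      · exact (mem_unitVars_iff hhard).mp hx
      · exact hC
  have hdisj : Disjoint ((unitVars F).image (fun x => ({(x, true)} : Clause)))
      (P.image (fun p => ({(p.1, false), (p.2.1, p.2.2)} : Clause))) := by
    simp only [disjoint_left, mem_image]
    rintro _ ⟨x, -, rfl⟩ ⟨p, -, hp⟩
    have : (p.1, false) ∈ ({(x, true)} : Clause) := hp ▸ by simp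
    simp at this
  conv_lhs => rw [hF]
  rw [sum_union hdisj, sum_image (by simp),
    sum_image (pair_injOn.mono (filter_subset _ _)), sum_filter,
    sum_product, sum_add_distrib]
  simp_rw [sum_product]

lemma wt_eq_sum (hhard : HardFormula F) :
    (wt w F : ℝ) = ∑ x ∈ unitVars F, (w {(x, true)} : ℝ) +
      ∑ x ∈ unitVars F, ∑ y ∈ V2set F, ((pairWt F w x y true : ℝ) + pairWt F w x y false) := by
  rw [wt, Nat.cast_sum, sum_eq_units_add_pairs hhard, ← sum_add_distrib]
  simp [pairWt, apply_ite (Nat.cast : ℕ → ℝ)]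

lemma satWt_eq_sum (hhard : HardFormula F) (τ : ℕ → Bool) :
    (satWt w τ F : ℝ) = ∑ x ∈ unitVars F, (if τ x then (w {(x, true)} : ℝ) else 0) +
      ∑ x ∈ unitVars F, ∑ y ∈ V2set F, (if τ x then (pairWt F w x y (τ y) : ℝ)
        else pairWt F w x y true + pairWt F w x y false) := by
  rw [satWt, sum_filter, Nat.cast_sum, sum_eq_units_add_pairs hhard, ← sum_add_distrib]
  refine sum_congr rfl fun x _ => ?_
  congr 1
  · simp [satC_singleton_iff]
  · refine sum_congr rfl fun y _ => ?_
    cases hx : τ x <;> cases hy : τ y <;> simp [hx, hy, satC_pair_iff, pairWt]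

end HardFormula

noncomputable def pairWtTotal (F : Finset Clause) (w : Clause → ℕ) (x : ℕ) : ℕ :=
  ∑ y ∈ V2set F, (pairWt F w x y true + pairWt F w x y false)

noncomputable def greedyOnUnits (F : Finset Clause) (w : Clause → ℕ)
    (α : V2set F → Bool) : ℕ → Bool := fun n =>
  if h : n ∈ V2set F then α ⟨n, h⟩
  else decide ((pairWtTotal F w n : ℝ) ≤ w {(n, true)} + ∑ y : V2set F, (pairWt F w n y (α y) : ℝ))

section UnitBound

variable {F : Finset Clause} {w : Clause → ℕ}

lemma satWt_greedyOnUnits (hhard : HardFormula F) (α : V2set F → Bool) :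
    (satWt w (greedyOnUnits F w α) F : ℝ) = ∑ x ∈ unitVars F,
      max (pairWtTotal F w x : ℝ) (w {(x, true)} + ∑ y : V2set F, (pairWt F w x y (α y) : ℝ)) := by
  rw [satWt_eq_sum hhard, ← sum_add_distrib]
  refine sum_congr rfl fun x hx => ?_
  have hxV : x ∉ V2set F := fun h => (mem_V2set_iff.mp h).1 hx
  have hy : ∀ y : V2set F, greedyOnUnits F w α y = α y := fun y => dif_pos y.2
  rw [← sum_coe_sort (V2set F)]
  simp only [hy]
  have hx' : greedyOnUnits F w α x = decide ((pairWtTotal F w x : ℝ) ≤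
      w {(x, true)} + ∑ y : V2set F, (pairWt F w x y (α y) : ℝ)) := dif_neg hxV
  rw [hx']
  have hb : (pairWtTotal F w x : ℝ) =
      ∑ y : V2set F, ((pairWt F w x y true : ℝ) + pairWt F w x y false) := by
    rw [sum_coe_sort (V2set F) (fun y => (pairWt F w x y true : ℝ) + pairWt F w x y false),
      pairWtTotal]
    push_cast
    rfl
  by_cases h : (pairWtTotal F w x : ℝ) ≤ w {(x, true)} + ∑ y : V2set F, (pairWt F w x y (α y) : ℝ)
  · simp only [decide_eq_true_eq, if_pos h, max_eq_right h]
  · simp only [decide_eq_true_eq, if_neg h, zero_add]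
    rw [max_eq_left (le_of_not_ge h), hb]

lemma le_expect_greedyOnUnits_at (hw : ∀ C ∈ F, 0 < w C) (h3 : Sat3 F) (hhard : HardFormula F)
    {x : ℕ} (hx : x ∈ unitVars F) :
    2 / 3 * ((w {(x, true)} : ℝ) + pairWtTotal F w x) + 1 / 6 ≤ 𝔼 α : V2set F → Bool,
      max (pairWtTotal F w x : ℝ) (w {(x, true)} + ∑ y : V2set F, (pairWt F w x y (α y) : ℝ)) := by
  have ha : 1 ≤ w {(x, true)} := hw _ ((mem_unitVars_iff hhard).mp hx)
  refine le_expect_max_add ha ?_ fun hb => ?_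
  · rw [expect_sum_apply_bool fun (y : V2set F) b => (pairWt F w x y b : ℝ),
      sum_coe_sort (V2set F) fun y => ((pairWt F w x y true : ℝ) + pairWt F w x y false) / 2,
      ← sum_div, pairWtTotal]
    push_cast
    rfl
  · obtain ⟨y, hy, hxy⟩ : ∃ y ∈ V2set F, pairWt F w x y true + pairWt F w x y false ≠ 0 :=
      exists_ne_zero_of_sum_ne_zero (by rw [← pairWtTotal]; omega)
    refine half_le_expect_abs_sum_apply_sub (fun (y : V2set F) b => (pairWt F w x y b : ℝ)) _
      (i := ⟨y, hy⟩) ?_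
    refine one_le_abs_natCast_sub (m := pairWt F w x y true) (n := pairWt F w x y false)
      fun h => hxy ?_
    rcases pairWt_eq_zero_or (w := w) h3 hhard hx y with h0 | h0 <;> omega

theorem exists_satWt_ge_unitVars (hw : ∀ C ∈ F, 0 < w C) (h3 : Sat3 F) (hhard : HardFormula F) :
    ∃ τ : ℕ → Bool, 2 / 3 * (wt w F : ℝ) + 1 / 6 * (unitVars F).card ≤ satWt w τ F := by
  have hmean : 2 / 3 * (wt w F : ℝ) + 1 / 6 * (unitVars F).card ≤
      𝔼 α : V2set F → Bool, (satWt w (greedyOnUnits F w α) F : ℝ) := by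
    simp only [satWt_greedyOnUnits hhard]
    rw [expect_sum_comm]
    calc 2 / 3 * (wt w F : ℝ) + 1 / 6 * (unitVars F).card
        = ∑ x ∈ unitVars F, (2 / 3 * ((w {(x, true)} : ℝ) + pairWtTotal F w x) + 1 / 6) := by
          rw [wt_eq_sum hhard]
          push_cast [pairWtTotal]
          simp only [mul_add, mul_sum, sum_add_distrib, sum_const, nsmul_eq_mul]
          ring
      _ ≤ _ := sum_le_sum fun x hx => le_expect_greedyOnUnits_at hw h3 hhard hx
  obtain ⟨α, -, hα⟩ := exists_le_of_le_expect univ_nonempty hmean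
  exact ⟨_, hα⟩

end UnitBound

noncomputable def activeWt (F : Finset Clause) (w : Clause → ℕ) (y : ℕ) (b : Bool)
    (β : unitVars F → Fin 3) : ℝ :=
  ∑ x : unitVars F, if β x = 0 then 0 else (pairWt F w x y b : ℝ)

noncomputable def greedyOnV2 (F : Finset Clause) (w : Clause → ℕ)
    (β : unitVars F → Fin 3) : ℕ → Bool := fun n =>
  if h : n ∈ unitVars F then β ⟨n, h⟩ ≠ 0
  else decide (activeWt F w n false β ≤ activeWt F w n true β)

section V2Bound

variable {F : Finset Clause} {w : Clause → ℕ}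

lemma satWt_greedyOnV2 (hhard : HardFormula F) (β : unitVars F → Fin 3) :
    (satWt w (greedyOnV2 F w β) F : ℝ) =
      ∑ x : unitVars F, (if β x = 0 then 0 else (w {((x : ℕ), true)} : ℝ)) +
      ∑ y ∈ V2set F, (∑ x ∈ unitVars F, ((pairWt F w x y true : ℝ) + pairWt F w x y false) -
        min (activeWt F w y true β) (activeWt F w y false β)) := by
  have hx : ∀ x : unitVars F, greedyOnV2 F w β x = decide (β x ≠ 0) := fun x => dif_pos x.2
  rw [satWt_eq_sum hhard]
  congr 1
  · rw [← sum_coe_sort (unitVars F)]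
    refine sum_congr rfl fun x _ => ?_
    by_cases h : β x = 0 <;> simp [hx, h]
  · rw [sum_comm]
    refine sum_congr rfl fun y hy => ?_
    have hsplit : ∀ c : Bool, ∑ x ∈ unitVars F, (if greedyOnV2 F w β x then
        (pairWt F w x y c : ℝ) else pairWt F w x y true + pairWt F w x y false) =
        ∑ x ∈ unitVars F, ((pairWt F w x y true : ℝ) + pairWt F w x y false) -
          activeWt F w y (!c) β := fun c => by
      rw [← sum_coe_sort (unitVars F), ← sum_coe_sort (unitVars F), activeWt, ← sum_sub_distrib]
      refine sum_congr rfl fun x _ => ?_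
      by_cases h : β x = 0 <;> cases c <;> simp [hx, h]
    have hy' : greedyOnV2 F w β y =
        decide (activeWt F w y false β ≤ activeWt F w y true β) := dif_neg (mem_V2set_iff.mp hy).1
    rw [hsplit, hy']
    by_cases h : activeWt F w y false β ≤ activeWt F w y true β
    · simp [h]
    · simp [h, min_eq_left (not_le.mp h).le]

lemma le_expect_greedyOnV2_at (hw : ∀ C ∈ F, 0 < w C) (h3 : Sat3 F) (hhard : HardFormula F)
    {y : ℕ} (hy : y ∈ V2set F) :
    2 / 3 * ∑ x ∈ unitVars F, ((pairWt F w x y true : ℝ) + pairWt F w x y false) + 2 / 9 ≤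
      𝔼 β : unitVars F → Fin 3,
        (∑ x ∈ unitVars F, ((pairWt F w x y true : ℝ) + pairWt F w x y false) -
          min (activeWt F w y true β) (activeWt F w y false β)) := by
  have hmean : ∀ b, 𝔼 β : unitVars F → Fin 3, activeWt F w y b β =
      2 / 3 * ∑ x ∈ unitVars F, (pairWt F w x y b : ℝ) := fun b => by
    simp only [activeWt]
    rw [expect_sum_ite_fin_three fun (x : unitVars F) => (pairWt F w x y b : ℝ),
      sum_coe_sort (unitVars F) fun x => (pairWt F w x y b : ℝ)]
  rw [sum_add_distrib]
  refine le_expect_sub_min (hmean true) (hmean false) ?_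
  have hdiff : ∀ β, activeWt F w y true β - activeWt F w y false β = ∑ x : unitVars F,
      if β x = 0 then 0 else ((pairWt F w x y true : ℝ) - pairWt F w x y false) := fun β => by
    rw [activeWt, activeWt, ← sum_sub_distrib]
    exact sum_congr rfl fun x _ => by split_ifs <;> simp
  simp only [hdiff]
  refine four_ninths_le_expect_abs_sum (fun x => ?_) ?_
  · by_cases h : pairWt F w x y true = pairWt F w x y false
    · exact Or.inl (by rw [h, sub_self])
    · exact Or.inr (one_le_abs_natCast_sub h)
  · obtain ⟨-, x, hx, b, hmem⟩ := mem_V2set_iff.mp hy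
    have hpos : 0 < pairWt F w x y b := by simpa [pairWt, hmem] using hw _ hmem
    refine ⟨⟨x, hx⟩, ?_⟩
    rcases pairWt_eq_zero_or (w := w) h3 hhard hx y with h0 | h0 <;> cases b <;> simp_all <;> omega

theorem exists_satWt_ge_V2set (hw : ∀ C ∈ F, 0 < w C) (h3 : Sat3 F) (hhard : HardFormula F) :
    ∃ τ : ℕ → Bool, 2 / 3 * (wt w F : ℝ) + 2 / 9 * (V2set F).card ≤ satWt w τ F := by
  have hmean : 2 / 3 * (wt w F : ℝ) + 2 / 9 * (V2set F).card ≤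
      𝔼 β : unitVars F → Fin 3, (satWt w (greedyOnV2 F w β) F : ℝ) := by
    simp only [satWt_greedyOnV2 hhard]
    rw [expect_add_distrib,
      expect_sum_ite_fin_three fun (x : unitVars F) => (w {((x : ℕ), true)} : ℝ),
      expect_sum_comm, sum_coe_sort (unitVars F) fun x => (w {(x, true)} : ℝ)]
    calc 2 / 3 * (wt w F : ℝ) + 2 / 9 * (V2set F).card
        = 2 / 3 * ∑ x ∈ unitVars F, (w {(x, true)} : ℝ) + ∑ y ∈ V2set F, (2 / 3 *
            ∑ x ∈ unitVars F, ((pairWt F w x y true : ℝ) + pairWt F w x y false) + 2 / 9) := by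
          rw [wt_eq_sum hhard, sum_comm (s := unitVars F)]
          simp only [mul_add, mul_sum, sum_add_distrib, sum_const, nsmul_eq_mul]
          ring
      _ ≤ _ := add_le_add_right (sum_le_sum fun y hy => le_expect_greedyOnV2_at hw h3 hhard hy) _
  obtain ⟨β, -, hβ⟩ := exists_le_of_le_expect univ_nonempty hmean
  exact ⟨_, hβ⟩

end V2Bound

theorem stmt15_general (F : Finset Clause) (w : Clause → ℕ)
    (hw : ∀ C ∈ F, 0 < w C) (h3 : Sat3 F) (hhard : HardFormula F) :
    ∃ τ : ℕ → Bool,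
      (2:ℝ)/3 * wt w F + (2:ℝ)/21 * ((vars F).card : ℝ) ≤ (satWt w τ F : ℝ) := by
  obtain ⟨τ₁, h₁⟩ := exists_satWt_ge_unitVars hw h3 hhard
  obtain ⟨τ₂, h₂⟩ := exists_satWt_ge_V2set hw h3 hhard
  have hcard : ((vars F).card : ℝ) = (unitVars F).card + (V2set F).card := by
    exact_mod_cast card_vars hhard
  rcases le_total (satWt w τ₁ F : ℝ) (satWt w τ₂ F) with h | h
  · exact ⟨τ₂, by linarith⟩
  · exact ⟨τ₁, by linarith⟩

theorem stmt15 (F : Finset Clause) (w : Clause → ℕ)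
    (hF : IsCNF F) (hw : ∀ C ∈ F, 0 < w C) (h3 : Sat3 F) (hhard : HardFormula F) :
    ∃ τ : ℕ → Bool,
      (2:ℝ)/3 * wt w F + (2:ℝ)/21 * ((vars F).card : ℝ) ≤ (satWt w τ F : ℝ) :=
  stmt15_general F w hw h3 hhard
end

section
/- Let F be a fat expanding 3-satisfiable weighted CNF formula, i.e., w(F_s) >= (18/133)(|V1| + |V2|) where V1 is the set of unit variables, V2 the set of non-unit variables occurring in hard two-literal clauses, and F_s the soft clauses. Then there exists an assignment tau with sat_tau(F) >= (2/3) w(F) + (2/453) |V(F)|. -/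
open Classical

/-! The random assignment setting unit variables true with probability `2/3` and all other
variables true with probability `1/2` falsifies a hard clause with probability at most `1/3`
and, since `F` is 3-satisfiable and its unit clauses are positive, a soft clause with
probability at most `8/27`. Some assignment therefore satisfies weight at least
`(2/3) w(F) + (1/27) w(F_s)`. Clauses meeting `V3` are soft, so expansion gives
`|V3| ≤ w(F_s)`, and fatness gives `|V(F)| ≤ (151/18) w(F_s)`; as
`(2/453) (151/18) = 1/27`, this is the claimed bound. -/

theorem sum_prod_mul_ite_forall_mem_eq {I : Type*} [Fintype I] [DecidableEq I]
    (g : I → Bool → ℝ) (hg : ∀ i, g i true + g i false = 1) (S : Finset I) (f : I → Bool) :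
    ∑ α : I → Bool, (∏ i, g i (α i)) * (if ∀ i ∈ S, α i = f i then 1 else 0) =
      ∏ i ∈ S, g i (f i) := by
  set h : I → Bool → ℝ := fun i b => if i ∈ S ∧ b ≠ f i then 0 else g i b
  have hprod : ∀ α : I → Bool,
      (∏ i, g i (α i)) * (if ∀ i ∈ S, α i = f i then 1 else 0) = ∏ i, h i (α i) := by
    intro α
    by_cases hα : ∀ i ∈ S, α i = f i
    · rw [if_pos hα, mul_one]
      exact Finset.prod_congr rfl fun i _ => by simp +contextual [h, hα i]
    · obtain ⟨i, hiS, hi⟩ := not_forall₂.1 hα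
      rw [if_neg hα, mul_zero, eq_comm]
      exact Finset.prod_eq_zero (Finset.mem_univ i) (if_pos ⟨hiS, hi⟩)
  have hfactor : ∀ i, ∑ b, h i b = if i ∈ S then g i (f i) else 1 := by
    intro i
    by_cases hi : i ∈ S
    · cases hf : f i <;> simp [h, hi, hf]
    · simpa [h, hi, add_comm] using hg i
  simp_rw [hprod, ← Fintype.prod_sum, hfactor, Fintype.prod_ite_mem]

theorem sum_prod_eq_one_s16 {I : Type*} [Fintype I] [DecidableEq I] (g : I → Bool → ℝ)
    (hg : ∀ i, g i true + g i false = 1) : ∑ α : I → Bool, ∏ i, g i (α i) = 1 := by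
  simpa using sum_prod_mul_ite_forall_mem_eq g hg ∅ fun _ => true

section Probability

variable {F : Finset Clause} {C : Clause}

noncomputable def valueProb (F : Finset Clause) (v : ℕ) (b : Bool) : ℝ :=
  if v ∈ unitVars F then (if b then 2/3 else 1/3) else 1/2

noncomputable def clauseFalseProb (F : Finset Clause) (C : Clause) : ℝ :=
  ∏ l ∈ C, valueProb F l.1 (!l.2)

theorem valueProb_true_add_false (v : ℕ) : valueProb F v true + valueProb F v false = 1 := by
  by_cases hv : v ∈ unitVars F <;> simp [valueProb, hv] <;> norm_num

theorem valueProb_pos (v : ℕ) (b : Bool) : 0 < valueProb F v b := by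
  unfold valueProb; split_ifs <;> norm_num

theorem valueProb_le_two_thirds (v : ℕ) (b : Bool) : valueProb F v b ≤ 2/3 := by
  unfold valueProb; split_ifs <;> norm_num

theorem valueProb_le_half {v : ℕ} {b : Bool} (h : v ∈ unitVars F → b = false) :
    valueProb F v b ≤ 1/2 := by
  unfold valueProb
  split_ifs with hv hb
  · exact absurd (h hv) (by simp [hb])
  all_goals norm_num

theorem valueProb_true_of_mem {v : ℕ} (hv : v ∈ unitVars F) : valueProb F v true = 2/3 := by
  simp [valueProb, hv]

theorem valueProb_false_of_mem {v : ℕ} (hv : v ∈ unitVars F) : valueProb F v false = 1/3 := by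
  simp [valueProb, hv]

theorem valueProb_of_not_mem {v : ℕ} (hv : v ∉ unitVars F) (b : Bool) :
    valueProb F v b = 1/2 := by
  simp [valueProb, hv]

theorem fst_mem_vars {l : ℕ × Bool} (hC : C ∈ F) (hl : l ∈ C) : l.1 ∈ vars F :=
  Finset.mem_sup.2 ⟨C, hC, Finset.mem_image_of_mem _ hl⟩

theorem IsCNF.injOn_fst (hF : IsCNF F) (hC : C ∈ F) :
    Set.InjOn Prod.fst (C : Set (ℕ × Bool)) := by
  rintro ⟨v, b⟩ hl ⟨v', b'⟩ hl' (rfl : v = v')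
  rw [Finset.mem_coe] at hl hl'
  cases b <;> cases b'
  · rfl
  · exact absurd ⟨hl', hl⟩ ((hF C hC).2 v)
  · exact absurd ⟨hl, hl'⟩ ((hF C hC).2 v)
  · rfl

/-- `decide ((v, false) ∈ C)` is the value of `v` falsifying the literal of `C` on `v`. -/
theorem IsCNF.decide_mem_neg (hF : IsCNF F) (hC : C ∈ F) {l : ℕ × Bool} (hl : l ∈ C) :
    decide ((l.1, false) ∈ C) = !l.2 := by
  obtain ⟨v, _ | _⟩ := l
  · simpa using hl
  · simpa using fun hneg => (hF C hC).2 v ⟨hl, hneg⟩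

theorem IsCNF.not_satC_extAssign_iff (hF : IsCNF F) (hC : C ∈ F)
    (α : {v // v ∈ vars F} → Bool) :
    ¬ SatC (extAssign F α) C ↔
      ∀ v ∈ (C.image Prod.fst).subtype (· ∈ vars F), α v = decide ((v.1, false) ∈ C) := by
  simp only [SatC, not_exists, not_and, Finset.mem_subtype, Finset.mem_image]
  constructor
  · rintro h ⟨v, hv⟩ ⟨l, hl, hlv⟩
    subst hlv
    have := h l hl
    rw [extAssign, dif_pos hv] at this
    rw [hF.decide_mem_neg hC hl]
    cases hb : l.2 <;> simpa [hb] using this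
  · intro h l hl hsat
    have hfalse : α ⟨l.1, fst_mem_vars hC hl⟩ = !l.2 :=
      (h ⟨l.1, fst_mem_vars hC hl⟩ ⟨l, hl, rfl⟩).trans (hF.decide_mem_neg hC hl)
    rw [extAssign, dif_pos (fst_mem_vars hC hl), hfalse] at hsat
    cases l.2 <;> simp at hsat

theorem IsCNF.prod_falsifying_eq (hF : IsCNF F) (hC : C ∈ F) :
    ∏ v ∈ (C.image Prod.fst).subtype (· ∈ vars F),
      valueProb F v (decide ((v.1, false) ∈ C)) = clauseFalseProb F C := by
  rw [Finset.prod_subtype_eq_prod_filter (fun v => valueProb F v (decide ((v, false) ∈ C))),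
    Finset.filter_true_of_mem fun v hv => by
      obtain ⟨l, hl, rfl⟩ := Finset.mem_image.1 hv; exact fst_mem_vars hC hl,
    Finset.prod_image (hF.injOn_fst hC)]
  exact Finset.prod_congr rfl fun l hl => by rw [hF.decide_mem_neg hC hl]

theorem IsCNF.probSat_eq (hF : IsCNF F) (hC : C ∈ F) :
    probSat F C = 1 - clauseFalseProb F C := by
  have hg (v : {v // v ∈ vars F}) := valueProb_true_add_false (F := F) v.1
  have hfalse := sum_prod_mul_ite_forall_mem_eq _ hg ((C.image Prod.fst).subtype (· ∈ vars F))
    fun v => decide ((v.1, false) ∈ C)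
  simp_rw [← hF.not_satC_extAssign_iff hC, hF.prod_falsifying_eq hC] at hfalse
  rw [← hfalse, eq_sub_iff_add_eq]
  refine Eq.trans ?_ (sum_prod_eq_one_s16 _ hg)
  rw [probSat, ← Finset.sum_add_distrib]
  refine Finset.sum_congr rfl fun α _ => ?_
  by_cases hsat : SatC (extAssign F α) C <;> simp [valueProb, hsat]

end Probability

section ClauseBounds

variable {F : Finset Clause} {C : Clause}

theorem mem_unitVars_of_singleton_mem {x : ℕ} (h : ({(x, true)} : Clause) ∈ F) :
    x ∈ unitVars F :=
  Finset.mem_sup.2 ⟨_, Finset.mem_filter.2 ⟨h, Finset.card_singleton _⟩, by simp⟩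

theorem UnitPos.singleton_mem {x : ℕ} (hup : UnitPos F) (hx : x ∈ unitVars F) :
    ({(x, true)} : Clause) ∈ F := by
  obtain ⟨C, hC, hxC⟩ := Finset.mem_sup.1 hx
  obtain ⟨hCF, hcard⟩ := Finset.mem_filter.1 hC
  obtain ⟨y, rfl⟩ := hup C hCF hcard
  obtain rfl : x = y := by simpa using hxC
  exact hCF

theorem clauseFalseProb_le_of_isHard (hC : C ∈ F) (hhard : IsHard F C) :
    clauseFalseProb F C ≤ 1/3 := by
  rcases hhard with ⟨x, rfl⟩ | ⟨x, hx, y, hy, b, rfl⟩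
  · simp [clauseFalseProb, valueProb_false_of_mem (mem_unitVars_of_singleton_mem hC)]
  · have hxy : x ≠ y := fun h => hy (h ▸ hx)
    rw [clauseFalseProb, Finset.prod_pair (by simp [hxy]), Bool.not_false,
      valueProb_true_of_mem hx, valueProb_of_not_mem hy]
    norm_num

theorem Sat3.pair_neg_not_mem (h3 : Sat3 F) (hup : UnitPos F) {x y : ℕ}
    (hx : x ∈ unitVars F) (hy : y ∈ unitVars F) :
    ({(x, false), (y, false)} : Clause) ∉ F := by
  intro hC
  obtain ⟨τ, ⟨l, hl, hτl⟩, hτx, hτy⟩ :=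
    h3 _ hC _ (hup.singleton_mem hx) _ (hup.singleton_mem hy)
  simp only [SatC, Finset.mem_singleton, exists_eq_left] at hτx hτy
  simp only [Finset.mem_insert, Finset.mem_singleton] at hl
  rcases hl with rfl | rfl <;> simp_all

theorem valueProb_le_third_of_pair_mem (h3 : Sat3 F) (hup : UnitPos F) {x : ℕ} {l : ℕ × Bool}
    (hx : x ∈ unitVars F) (hC : {(x, false), l} ∈ F) (hsoft : ¬ IsHard F {(x, false), l}) :
    valueProb F l.1 (!l.2) ≤ 1/3 := by
  obtain ⟨y, b⟩ := l
  by_cases hy : y ∈ unitVars F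
  · cases b
    · exact absurd hC (h3.pair_neg_not_mem hup hx hy)
    · simp [valueProb_false_of_mem hy]
  · exact absurd (Or.inr ⟨x, hx, y, hy, b, rfl⟩) hsoft

theorem valueProb_le_half_of_not_neg_unit {l : ℕ × Bool}
    (hl : ¬ (l.1 ∈ unitVars F ∧ l.2 = false)) : valueProb F l.1 (!l.2) ≤ 1/2 :=
  valueProb_le_half fun hv => by simpa using not_and.1 hl hv

/-- A soft two-literal clause is falsified with probability at most `2/3 · 1/3`, or `1/2 · 1/2`
when it contains no negative unit literal. -/
theorem clauseFalseProb_pair_le (h3 : Sat3 F) (hup : UnitPos F) {a b : ℕ × Bool} (hab : a ≠ b)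
    (hC : {a, b} ∈ F) (hsoft : ¬ IsHard F {a, b}) : clauseFalseProb F {a, b} ≤ 8/27 := by
  rw [clauseFalseProb, Finset.prod_pair hab]
  have hqa := (valueProb_pos (F := F) a.1 (!a.2)).le
  have hqb := (valueProb_pos (F := F) b.1 (!b.2)).le
  by_cases ha : a.1 ∈ unitVars F ∧ a.2 = false
  · have : valueProb F b.1 (!b.2) ≤ 1/3 := by
      obtain ⟨x, c⟩ := a
      obtain ⟨hx, rfl : c = false⟩ := ha
      exact valueProb_le_third_of_pair_mem h3 hup hx hC hsoft
    nlinarith [valueProb_le_two_thirds (F := F) a.1 (!a.2)]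
  by_cases hb : b.1 ∈ unitVars F ∧ b.2 = false
  · have : valueProb F a.1 (!a.2) ≤ 1/3 := by
      obtain ⟨y, c⟩ := b
      obtain ⟨hy, rfl : c = false⟩ := hb
      rw [Finset.pair_comm] at hC hsoft
      exact valueProb_le_third_of_pair_mem h3 hup hy hC hsoft
    nlinarith [valueProb_le_two_thirds (F := F) b.1 (!b.2)]
  nlinarith [valueProb_le_half_of_not_neg_unit ha, valueProb_le_half_of_not_neg_unit hb]

theorem clauseFalseProb_le_of_three_le_card (h : 3 ≤ C.card) : clauseFalseProb F C ≤ 8/27 :=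
  calc clauseFalseProb F C ≤ ∏ _l ∈ C, (2/3 : ℝ) :=
        Finset.prod_le_prod (fun _ _ => (valueProb_pos _ _).le)
          fun _ _ => valueProb_le_two_thirds _ _
    _ = (2/3) ^ C.card := Finset.prod_const _
    _ ≤ (2/3) ^ 3 := pow_le_pow_of_le_one (by norm_num) (by norm_num) h
    _ = 8/27 := by norm_num

theorem clauseFalseProb_le_of_not_isHard (hF : IsCNF F) (h3 : Sat3 F) (hup : UnitPos F)
    (hC : C ∈ F) (hsoft : ¬ IsHard F C) : clauseFalseProb F C ≤ 8/27 := by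
  rcases Nat.lt_or_ge C.card 3 with hcard | hcard
  · interval_cases hc : C.card
    · exact absurd (Finset.card_eq_zero.1 hc) (hF C hC).1.ne_empty
    · exact absurd (Or.inl (hup C hC hc)) hsoft
    · obtain ⟨a, b, hab, rfl⟩ := Finset.card_eq_two.1 hc
      exact clauseFalseProb_pair_le h3 hup hab hC hsoft
  · exact clauseFalseProb_le_of_three_le_card hcard

end ClauseBounds

section Expectation

variable {F : Finset Clause}

theorem sum_mul_satWt_extAssign_eq (w : Clause → ℕ) :
    ∑ α : {v // v ∈ vars F} → Bool,
        (∏ v, valueProb F v.1 (α v)) * (satWt w (extAssign F α) F : ℝ) =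
      ∑ C ∈ F, (w C : ℝ) * probSat F C := by
  simp_rw [satWt, Nat.cast_sum, Finset.sum_filter, Finset.mul_sum]
  rw [Finset.sum_comm]
  refine Finset.sum_congr rfl fun C _ => ?_
  rw [probSat, Finset.mul_sum]
  refine Finset.sum_congr rfl fun α _ => ?_
  split_ifs <;> simp [valueProb, mul_comm]

theorem exists_sum_mul_probSat_le_satWt (w : Clause → ℕ) :
    ∃ τ : ℕ → Bool, ∑ C ∈ F, (w C : ℝ) * probSat F C ≤ satWt w τ F := by
  set P : ({v // v ∈ vars F} → Bool) → ℝ := fun α => ∏ v, valueProb F v.1 (α v)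
  have hP : ∑ α, P α = 1 := sum_prod_eq_one_s16 _ fun v => valueProb_true_add_false v.1
  obtain ⟨α, -, hα⟩ := Finset.exists_le_of_sum_le Finset.univ_nonempty
    (f := fun α => P α * ∑ C ∈ F, (w C : ℝ) * probSat F C)
    (g := fun α => P α * satWt w (extAssign F α) F)
    (by rw [← Finset.sum_mul, hP, one_mul, sum_mul_satWt_extAssign_eq])
  exact ⟨extAssign F α,
    le_of_mul_le_mul_left hα (Finset.prod_pos fun v _ => valueProb_pos v.1 (α v))⟩

theorem sum_mul_probSat_ge (hF : IsCNF F) (h3 : Sat3 F) (hup : UnitPos F) (w : Clause → ℕ) :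
    2/3 * (wt w F : ℝ) + 1/27 * wt w (softF F) ≤ ∑ C ∈ F, (w C : ℝ) * probSat F C := by
  have hclause : ∀ C ∈ F, 2/3 * (w C : ℝ) + 1/27 * (if ¬ IsHard F C then (w C : ℝ) else 0) ≤
      w C * probSat F C := by
    intro C hC
    have hw : (0 : ℝ) ≤ w C := (w C).cast_nonneg
    rw [hF.probSat_eq hC]
    split_ifs with hhard
    · nlinarith [clauseFalseProb_le_of_isHard hC hhard]
    · nlinarith [clauseFalseProb_le_of_not_isHard hF h3 hup hC hhard]
  calc 2/3 * (wt w F : ℝ) + 1/27 * wt w (softF F)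
      = ∑ C ∈ F, (2/3 * (w C : ℝ) + 1/27 * (if ¬ IsHard F C then (w C : ℝ) else 0)) := by
        simp [wt, softF, Finset.sum_add_distrib, Finset.mul_sum, Finset.sum_filter]
    _ ≤ ∑ C ∈ F, (w C : ℝ) * probSat F C := Finset.sum_le_sum hclause

theorem exists_satWt_ge (hF : IsCNF F) (h3 : Sat3 F) (hup : UnitPos F) (w : Clause → ℕ) :
    ∃ τ : ℕ → Bool, 2/3 * (wt w F : ℝ) + 1/27 * wt w (softF F) ≤ satWt w τ F := by
  obtain ⟨τ, hτ⟩ := exists_sum_mul_probSat_le_satWt (F := F) w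
  exact ⟨τ, (sum_mul_probSat_ge hF h3 hup w).trans hτ⟩

end Expectation

section Counting

variable {F : Finset Clause}

theorem mem_V2set {C : Clause} (hC : C ∈ F) {x y : ℕ} {b : Bool} (hx : x ∈ unitVars F)
    (hy : y ∉ unitVars F) (hCxy : C = {(x, false), (y, b)}) : y ∈ V2set F :=
  Finset.mem_sdiff.2 ⟨Finset.mem_sup.2 ⟨C, Finset.mem_filter.2 ⟨hC, x, hx, y, hy, b, hCxy⟩,
    by simp [hCxy]⟩, hy⟩

theorem FU_sdiff_subset_softF : FU F (vars F \ (unitVars F ∪ V2set F)) ⊆ softF F := by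
  intro C hC
  obtain ⟨hCF, l, hl, hlV3⟩ := Finset.mem_filter.1 hC
  simp only [Finset.mem_sdiff, Finset.mem_union, not_or] at hlV3
  refine Finset.mem_filter.2 ⟨hCF, ?_⟩
  rintro (⟨x, rfl⟩ | ⟨x, hx, y, hy, b, rfl⟩)
  · obtain rfl := Finset.mem_singleton.1 hl
    exact hlV3.2.1 (mem_unitVars_of_singleton_mem hCF)
  · rcases Finset.mem_insert.1 hl with rfl | hl
    · exact hlV3.2.1 hx
    · obtain rfl := Finset.mem_singleton.1 hl
      exact hlV3.2.2 (mem_V2set hCF hx hy rfl)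

theorem card_vars_le_add_wt_softF {w : Clause → ℕ} (hexp : Expanding F w) :
    (vars F).card ≤ (unitVars F).card + (V2set F).card + wt w (softF F) := by
  set V3 := vars F \ (unitVars F ∪ V2set F)
  have hV3 : V3.card ≤ wt w (softF F) :=
    (hexp V3 Finset.sdiff_subset).trans (Finset.sum_le_sum_of_subset FU_sdiff_subset_softF)
  have hsplit : (vars F).card ≤ V3.card + (unitVars F ∪ V2set F).card :=
    Finset.card_le_card_sdiff_add_card
  have hunion := Finset.card_union_le (unitVars F) (V2set F)
  omega

end Counting

theorem stmt16_general (F : Finset Clause) (w : Clause → ℕ)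
    (hF : IsCNF F) (h3 : Sat3 F) (hup : UnitPos F)
    (hexp : Expanding F w)
    (hfat : (18:ℝ)/133 * (((unitVars F).card : ℝ) + ((V2set F).card : ℝ))
              ≤ (wt w (softF F) : ℝ)) :
    ∃ τ : ℕ → Bool,
      (2:ℝ)/3 * wt w F + (2:ℝ)/453 * ((vars F).card : ℝ) ≤ (satWt w τ F : ℝ) := by
  obtain ⟨τ, hτ⟩ := exists_satWt_ge hF h3 hup w
  have hcard : ((vars F).card : ℝ) ≤ (unitVars F).card + (V2set F).card + wt w (softF F) := by
    exact_mod_cast card_vars_le_add_wt_softF hexp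
  exact ⟨τ, by linarith⟩

theorem stmt16 (F : Finset Clause) (w : Clause → ℕ)
    (hF : IsCNF F) (hw : ∀ C ∈ F, 0 < w C) (h3 : Sat3 F) (hup : UnitPos F)
    (hexp : Expanding F w)
    (hfat : (18:ℝ)/133 * (((unitVars F).card : ℝ) + ((V2set F).card : ℝ))
              ≤ (wt w (softF F) : ℝ)) :
    ∃ τ : ℕ → Bool,
      (2:ℝ)/3 * wt w F + (2:ℝ)/453 * ((vars F).card : ℝ) ≤ (satWt w τ F : ℝ) :=
  stmt16_general F w hF h3 hup hexp hfat
end
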